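/- Let H = ⟨a_1, ..., a_n⟩ (n ≥ 3) with α ∈ PF(H) satisfying (n-1)α ∉ H. Then after a suitable permutation of the generators, there exist positive integers ℓ_1, ..., ℓ_n such that α + a_i = ℓ_{i+1} a_{i+1} for 1 ≤ i ≤ n-1 and α + a_n = ℓ_1 a_1; i.e., the RF-matrix associated to α can be taken to be cyclic with exactly one positive off-diagonal entry per row, located in the next column. -/

import Mathlib

/-- The numerical semigroup (as a subset of ℤ) generated by `a`. -/
def SgGen {n : ℕ} (a : Fin n → ℕ) : Set ℤ :=
  {x | ∃ c : Fin n → ℕ, x = ∑ i, (c i : ℤ) * a i}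

/-- `α` is a pseudo-Frobenius number of `⟨a⟩`. -/
def IsPF {n : ℕ} (a : Fin n → ℕ) (α : ℤ) : Prop :=
  α ∉ SgGen a ∧ ∀ i, α + a i ∈ SgGen a

/-- `a` minimally generates: no generator is a combination of the others. -/
def MinGen {n : ℕ} (a : Fin n → ℕ) : Prop :=
  ∀ i, ¬ ∃ c : Fin n → ℕ, c i = 0 ∧ (a i : ℤ) = ∑ j, (c j : ℤ) * a j

/-!
Write `α + a i = ∑ j, c i j * a j` and draw an edge `i → j` when `c i j > 0`. Along an edge
`α + a i - a j ∈ H`, so telescoping around a closed walk of length `k` gives `k α ∈ H`; and since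
`α + x ∈ H` for every nonzero `x ∈ H`, that would push `(n - 1) α` into `H` whenever
`1 ≤ k ≤ n - 1`. So the graph on the `n` generators has no closed walk shorter than `n`, while
every vertex has an out-edge (minimality excludes `α = -a i`). Any successor function is then a
single `n`-cycle, and no vertex can have a second out-edge.
-/

open Function

section ClosedWalks

variable {β : Type*}

def HasClosedWalk (R : β → β → Prop) (k : ℕ) : Prop :=
  ∃ w : ℕ → β, (∀ t < k, R (w t) (w (t + 1))) ∧ w k = w 0

def NoShortClosedWalk [Fintype β] (R : β → β → Prop) : Prop :=
  ∀ k, 0 < k → k < Fintype.card β → ¬ HasClosedWalk R k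

variable [Fintype β] {R : β → β → Prop} {g : β → β}

theorem NoShortClosedWalk.iterate_ne_self (hR : NoShortClosedWalk R) (hg : ∀ x, R x (g x))
    {k : ℕ} (hk0 : 0 < k) (hk : k < Fintype.card β) (x : β) : g^[k] x ≠ x := fun hx =>
  hR k hk0 hk ⟨(g^[·] x), fun t _ => by simp only [iterate_succ_apply']; exact hg _, hx⟩

theorem NoShortClosedWalk.isPeriodicPt_card (hR : NoShortClosedWalk R) (hg : ∀ x, R x (g x))
    (x : β) : IsPeriodicPt g (Fintype.card β) x := by
  obtain ⟨p, q, hpq, hfeq⟩ := Fintype.exists_ne_map_eq_of_card_lt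
    (fun t : Fin (Fintype.card β + 1) => g^[t] x) (by simp)
  wlog hlt : p < q generalizing p q
  · exact this q p hpq.symm hfeq.symm (lt_of_le_of_ne (not_lt.mp hlt) (Ne.symm hpq))
  have hper : g^[(q - p : ℕ)] (g^[p] x) = g^[p] x := by
    rw [← iterate_add_apply, Nat.sub_add_cancel hlt.le]; exact hfeq.symm
  have hgap : Fintype.card β ≤ q - p :=
    not_lt.mp fun h => hR.iterate_ne_self hg (Nat.sub_pos_of_lt hlt) h _ hper
  have hp : (p : ℕ) = 0 := by omega
  have hq : (q : ℕ) = Fintype.card β := by omega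
  simpa [hp, hq, IsPeriodicPt, IsFixedPt] using hfeq.symm

theorem NoShortClosedWalk.minimalPeriod_eq_card (hR : NoShortClosedWalk R)
    (hg : ∀ x, R x (g x)) (x : β) : minimalPeriod g x = Fintype.card β := by
  have hpos : 0 < minimalPeriod g x :=
    (hR.isPeriodicPt_card hg x).minimalPeriod_pos (Fintype.card_pos_iff.mpr ⟨x⟩)
  refine minimalPeriod_le_card.antisymm (not_lt.mp fun h => ?_)
  exact hR.iterate_ne_self hg hpos h x (isPeriodicPt_minimalPeriod g x)

theorem NoShortClosedWalk.injective (hR : NoShortClosedWalk R) (hg : ∀ x, R x (g x)) :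
    Injective g :=
  injective_iff_periodicPts_eq_univ.mpr <| Set.eq_univ_of_forall fun x =>
    minimalPeriod_pos_iff_mem_periodicPts.mp <| by
      rw [hR.minimalPeriod_eq_card hg]; exact Fintype.card_pos_iff.mpr ⟨x⟩

/-- Redirecting the edge out of `x` to `y` gives another successor function, which must be
injective too; as `g` is a bijection, this forces `y = g x`. -/
theorem NoShortClosedWalk.eq_of_rel (hR : NoShortClosedWalk R) (hg : ∀ x, R x (g x))
    {x y : β} (hxy : R x y) : y = g x := by
  classical
  by_contra hne
  obtain ⟨z, rfl⟩ := (Finite.injective_iff_surjective.mp (hR.injective hg)) y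
  have hzx : z ≠ x := by rintro rfl; exact hne rfl
  have hg' : ∀ u, R u (update g x (g z) u) := fun u => by
    rcases eq_or_ne u x with rfl | hu
    · simpa using hxy
    · simpa [hu] using hg u
  exact hzx <| hR.injective hg' (by simp [hzx])

theorem NoShortClosedWalk.exists_equiv_fin {n : ℕ} [NeZero n] (hR : NoShortClosedWalk R)
    (hsucc : ∀ x, ∃ y, R x y) (hcard : Fintype.card β = n) :
    ∃ σ : Fin n ≃ β, ∀ i y, R (σ i) y ↔ y = σ (i + 1) := by
  choose g hg using hsucc
  obtain ⟨x₀⟩ : Nonempty β := Fintype.card_pos_iff.mp (hcard ▸ Nat.pos_of_neZero n)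
  have hper : minimalPeriod g x₀ = n := hcard ▸ hR.minimalPeriod_eq_card hg x₀
  have hinj : Injective fun i : Fin n => g^[i] x₀ := fun i j hij =>
    Fin.ext <| iterate_injOn_Iio_minimalPeriod (hper ▸ i.isLt) (hper ▸ j.isLt) hij
  let σ : Fin n ≃ β :=
    Equiv.ofBijective _ ((Fintype.bijective_iff_injective_and_card _).mpr ⟨hinj, by simp [hcard]⟩)
  have hσ : ∀ i, σ (i + 1) = g (σ i) := fun i => by
    change g^[(i + 1 : Fin n)] x₀ = g (g^[i] x₀)
    have hmod := iterate_mod_minimalPeriod_eq (f := g) (x := x₀) (n := i + 1)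
    rw [hper] at hmod
    rw [Fin.val_add, Fin.val_one', Nat.add_mod_mod, hmod, iterate_succ_apply']
  exact ⟨σ, fun i y => ⟨fun h => hσ i ▸ hR.eq_of_rel hg h, fun h => h ▸ hσ i ▸ hg _⟩⟩

end ClosedWalks

namespace SgGen

variable {n : ℕ} {a : Fin n → ℕ} {x y : ℤ}

theorem zero_mem : (0 : ℤ) ∈ SgGen a := ⟨0, by simp⟩

theorem add_mem (hx : x ∈ SgGen a) (hy : y ∈ SgGen a) : x + y ∈ SgGen a := by
  obtain ⟨c, rfl⟩ := hx
  obtain ⟨d, rfl⟩ := hy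
  exact ⟨c + d, by simp [add_mul, Finset.sum_add_distrib]⟩

theorem sum_mem {ι : Type*} (s : Finset ι) {f : ι → ℤ} (hf : ∀ i ∈ s, f i ∈ SgGen a) :
    ∑ i ∈ s, f i ∈ SgGen a :=
  Finset.sum_induction f (· ∈ SgGen a) (fun _ _ => add_mem) zero_mem hf

theorem sum_sub_mem {c : Fin n → ℕ} {i : Fin n} (hci : 0 < c i) :
    ∑ j, (c j : ℤ) * a j - a i ∈ SgGen a := by
  classical
  let e : Fin n → ℕ := Pi.single i 1
  refine ⟨c - e, ?_⟩
  have hc : ∀ j, (c j : ℤ) = (c - e) j + e j := fun j => by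
    rcases eq_or_ne j i with rfl | hj <;> simp [e, *]
  simp_rw [hc, add_mul, Finset.sum_add_distrib]
  simp [e, Pi.single_apply]

theorem exists_sub_mem (hx : x ∈ SgGen a) (hx0 : x ≠ 0) : ∃ i, x - a i ∈ SgGen a := by
  obtain ⟨c, rfl⟩ := hx
  obtain ⟨i, hi⟩ : ∃ i, c i ≠ 0 := by
    by_contra! h
    simp [h] at hx0
  exact ⟨i, sum_sub_mem (Nat.pos_of_ne_zero hi)⟩

end SgGen

namespace IsPF

variable {n : ℕ} {a : Fin n → ℕ} {α : ℤ}

theorem add_mem (hα : IsPF a α) {x : ℤ} (hx : x ∈ SgGen a) (hx0 : x ≠ 0) :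
    α + x ∈ SgGen a := by
  obtain ⟨i, hi⟩ := SgGen.exists_sub_mem hx hx0
  simpa using SgGen.add_mem (hα.2 i) hi

theorem ne_zero (hα : IsPF a α) : α ≠ 0 := fun h => hα.1 (h ▸ SgGen.zero_mem)

theorem mul_notMem {k m : ℕ} (hα : IsPF a α) (hk : 0 < k) (hkm : k ≤ m)
    (hm : (m : ℤ) * α ∉ SgGen a) : (k : ℤ) * α ∉ SgGen a := by
  intro hkα
  refine hm (Nat.le_induction hkα (fun j hj hjα => ?_) m hkm)
  have hj0 : (j : ℤ) * α ≠ 0 := mul_ne_zero (by exact_mod_cast (hk.trans_le hj).ne') hα.ne_zero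
  simpa [add_mul, add_comm] using hα.add_mem hjα hj0

theorem coeff_self_eq_zero (hα : IsPF a α) {i : Fin n} {c : Fin n → ℕ}
    (hc : α + a i = ∑ j, (c j : ℤ) * a j) : c i = 0 := by
  by_contra h
  exact hα.1 (by simpa [← hc] using SgGen.sum_sub_mem (a := a) (Nat.pos_of_ne_zero h))

theorem exists_coeff_pos [Nontrivial (Fin n)] (hmin : MinGen a) (hα : IsPF a α) {i : Fin n}
    {c : Fin n → ℕ} (hc : α + a i = ∑ j, (c j : ℤ) * a j) : ∃ j, 0 < c j := by
  classical
  by_contra! hzero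
  have hαi : α = -a i := by simp [Nat.le_zero.mp (hzero _)] at hc; linarith
  obtain ⟨j, hji⟩ := exists_ne i
  obtain ⟨d, hd⟩ := hα.2 j
  refine hmin j ⟨d + Pi.single i 1, by simp [hα.coeff_self_eq_zero hd, hji], ?_⟩
  simp [add_mul, Finset.sum_add_distrib, ← hd, hαi, Pi.single_apply]

end IsPF

theorem mul_mem_sgGen_of_hasClosedWalk {n : ℕ} {a : Fin n → ℕ} {α : ℤ}
    {c : Fin n → Fin n → ℕ} (hc : ∀ u, α + a u = ∑ j, (c u j : ℤ) * a j) {k : ℕ}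
    (hw : HasClosedWalk (fun u v => 0 < c u v) k) : (k : ℤ) * α ∈ SgGen a := by
  obtain ⟨w, hstep, hclosed⟩ := hw
  have htel : ∑ t ∈ Finset.range k, (α + a (w t) - a (w (t + 1))) = k * α := by
    have hsum := Finset.sum_range_sub (fun t => (a (w t) : ℤ)) k
    rw [hclosed, sub_self] at hsum
    calc ∑ t ∈ Finset.range k, (α + a (w t) - a (w (t + 1)))
        = ∑ t ∈ Finset.range k, α - ∑ t ∈ Finset.range k, ((a (w (t + 1)) : ℤ) - a (w t)) := by
          rw [← Finset.sum_sub_distrib]; exact Finset.sum_congr rfl fun _ _ => by ring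
      _ = k * α := by simp [hsum]
  rw [← htel]
  exact SgGen.sum_mem _ fun t ht => hc (w t) ▸ SgGen.sum_sub_mem (hstep t (Finset.mem_range.mp ht))

theorem stmt18_general {n : ℕ} [NeZero n] (hn : 3 ≤ n) (a : Fin n → ℕ) (hmin : MinGen a)
    (α : ℤ) (hα : IsPF a α) (hout : ((n : ℤ) - 1) * α ∉ SgGen a) :
    ∃ σ : Equiv.Perm (Fin n), ∃ ℓ : Fin n → ℕ, (∀ i, 0 < ℓ i) ∧
      ∀ i : Fin n, α + a (σ i) = (ℓ (i + 1) : ℤ) * a (σ (i + 1)) := by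
  choose c hc using hα.2
  have : Nontrivial (Fin n) := Fin.nontrivial_iff_two_le.mpr (by omega)
  have hR : NoShortClosedWalk fun u v : Fin n => 0 < c u v := fun k hk0 hk hw => by
    rw [Fintype.card_fin] at hk
    refine hα.mul_notMem hk0 (Nat.le_sub_one_of_lt hk) ?_ (mul_mem_sgGen_of_hasClosedWalk hc hw)
    rwa [Nat.cast_sub (by omega), Nat.cast_one]
  obtain ⟨σ, hσ⟩ := hR.exists_equiv_fin (fun u => hα.exists_coeff_pos hmin (hc u))
    (Fintype.card_fin n)
  refine ⟨σ, fun j => c (σ (j - 1)) (σ j), fun j => ?_, fun i => ?_⟩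
  · simpa using (hσ (j - 1) (σ j)).2 (by simp)
  · dsimp only
    rw [hc, Fintype.sum_eq_single (σ (i + 1)), add_sub_cancel_right]
    intro j hj
    simp [Nat.eq_zero_of_not_pos fun h => hj ((hσ i j).1 h)]

theorem stmt18 {n : ℕ} [NeZero n] (hn : 3 ≤ n) (a : Fin n → ℕ) (ha : ∀ i, 0 < a i)
    (hgcd : Finset.univ.gcd a = 1) (hmin : MinGen a)
    (α : ℤ) (hα : IsPF a α) (hout : ((n : ℤ) - 1) * α ∉ SgGen a) :
    ∃ σ : Equiv.Perm (Fin n), ∃ ℓ : Fin n → ℕ, (∀ i, 0 < ℓ i) ∧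
      ∀ i : Fin n, α + a (σ i) = (ℓ (i + 1) : ℤ) * a (σ (i + 1)) :=
  stmt18_general hn a hmin α hα hout
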